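/- arXiv:1311.0176 — 4 statements merged into one kernel-verified Lean document; each statement's English description precedes it below -/
import Mathlib

section
/- Conversely, for the system X' = X, Y' = -(1/ε)Y + (1/ε)X² with ε > 0: if the difference of the two solutions starting from (X₀, Y₀) and (X̃₀, Ỹ₀) satisfies sup_{t ≤ 0} e^{-t}(|X(t)-X̃(t)| + |Y(t)-Ỹ(t)|) < ∞, then (Y₀ - Ỹ₀) - (X₀² - X̃₀²)/(1+2ε) = 0. -/
open Real Filter

/-
The difference of the two `Y`-components is `c e^{-t/ε} + d e^{2t}` with
`d = (X₀² - X̃₀²)/(1+2ε)` and `c = (Y₀ - Ỹ₀) - d`. For `t ≤ 0` the weight `e^{-t}` is at least `1`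
and `e^{2t}` at most `1`, so the hypothesis bounds `|c| e^{-t/ε}` on `t ≤ 0`; since `e^{-t/ε} → ∞`
as `t → -∞`, this forces `c = 0`.
-/

lemma eq_zero_of_forall_abs_mul_exp_neg_div_le {ε c M : ℝ} (hε : 0 < ε)
    (hM : ∀ t ≤ (0 : ℝ), |c| * exp (-t / ε) ≤ M) : c = 0 := by
  by_contra hc
  have hlim : Tendsto (fun t => |c| * exp (-t / ε)) atBot atTop :=
    (tendsto_exp_atTop.comp
      ((tendsto_neg_atBot_atTop).atTop_div_const hε)).const_mul_atTop (abs_pos.mpr hc)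
  obtain ⟨t, hgt, ht⟩ := ((hlim.eventually_gt_atTop M).and (eventually_le_atBot 0)).exists
  exact (hM t ht).not_gt hgt

lemma eq_zero_of_forall_abs_mul_exp_neg_div_add_le {ε a c d M : ℝ} (hε : 0 < ε) (ha : 0 ≤ a)
    (hM : ∀ t ≤ (0 : ℝ), |c * exp (-t / ε) + d * exp (a * t)| ≤ M) : c = 0 := by
  refine eq_zero_of_forall_abs_mul_exp_neg_div_le hε (M := M + |d|) fun t ht => ?_
  have hexp : exp (a * t) ≤ 1 := exp_le_one_iff.mpr (mul_nonpos_of_nonneg_of_nonpos ha ht)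
  calc |c| * exp (-t / ε) = |c * exp (-t / ε) + d * exp (a * t) - d * exp (a * t)| := by
        rw [add_sub_cancel_right, abs_mul, abs_exp]
    _ ≤ |c * exp (-t / ε) + d * exp (a * t)| + |d * exp (a * t)| := abs_sub _ _
    _ ≤ M + |d| := by
        rw [abs_mul, abs_exp]
        gcongr
        · exact hM t ht
        · exact mul_le_of_le_one_right (abs_nonneg d) hexp

/-- Converse fiber characterization: if the difference of the two explicit solutions of
`X' = X`, `Y' = -(1/ε)Y + (1/ε)X²` satisfies
`sup_{t ≤ 0} e^{-t}(|X(t)-X̃(t)| + |Y(t)-Ỹ(t)|) < ∞`, then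
`(Y₀ - Ỹ₀) - (X₀² - X̃₀²)/(1+2ε) = 0`. -/
theorem stmt2 (ε X₀ Y₀ X₁ Y₁ : ℝ) (hε : 0 < ε)
    (hbdd : ∃ M : ℝ, ∀ t ≤ (0:ℝ),
      Real.exp (-t) *
        (|X₀ * Real.exp t - X₁ * Real.exp t|
        + |(Y₀ * Real.exp (-t/ε) + (X₀^2/(1+2*ε)) * (Real.exp (2*t) - Real.exp (-t/ε)))
          - (Y₁ * Real.exp (-t/ε) + (X₁^2/(1+2*ε)) * (Real.exp (2*t) - Real.exp (-t/ε)))|)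
      ≤ M) :
    (Y₀ - Y₁) - (X₀^2 - X₁^2) / (1 + 2*ε) = 0 := by
  obtain ⟨M, hM⟩ := hbdd
  refine eq_zero_of_forall_abs_mul_exp_neg_div_add_le hε zero_le_two
    (d := (X₀^2 - X₁^2) / (1 + 2*ε)) (M := M) fun t ht => ?_
  have hweight : 1 ≤ exp (-t) := one_le_exp (neg_nonneg.mpr ht)
  calc _ = |(Y₀ * exp (-t/ε) + (X₀^2/(1+2*ε)) * (exp (2*t) - exp (-t/ε)))
          - (Y₁ * exp (-t/ε) + (X₁^2/(1+2*ε)) * (exp (2*t) - exp (-t/ε)))| := by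
        congr 1; ring
    _ ≤ |X₀ * exp t - X₁ * exp t|
          + |(Y₀ * exp (-t/ε) + (X₀^2/(1+2*ε)) * (exp (2*t) - exp (-t/ε)))
            - (Y₁ * exp (-t/ε) + (X₁^2/(1+2*ε)) * (exp (2*t) - exp (-t/ε)))| :=
        le_add_of_nonneg_left (abs_nonneg _)
    _ ≤ exp (-t) * _ := le_mul_of_one_le_left (by positivity) hweight
    _ ≤ M := hM t ht
end

section
/- Let γ_s < 0, β = -γ_s/2 > 0. For any continuous φ : (-∞,0] → ℝ with ‖φ‖_β := sup_{t≤0} e^{-βt}|φ(t)| < ∞, the function t ↦ ∫_0^t e^{-γ_s(t-s)} φ(s) ds (for t ≤ 0) satisfies sup_{t≤0} e^{-βt}|∫_t^0 e^{-γ_s(t-s)} φ(s) ds| ≤ (1/(-β - γ_s)) ‖φ‖_β. -/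
open Real

/-! The weight bound gives `|φ s| ≤ M e^{βs}`, so the integrand is dominated by
`M e^{-γt} e^{(γ+β)s}`; since `γ + β < 0`, the integral of `e^{(γ+β)s}` over `[t, 0]`
is at most `e^{(γ+β)t}/(-(γ+β))`, and the weights `e^{-βt}`, `e^{-γt}`, `e^{(γ+β)t}`
cancel. -/

theorem integral_exp_mul_le_of_neg {k : ℝ} (hk : k < 0) (t : ℝ) :
    ∫ s in t..0, exp (k * s) ≤ exp (k * t) / -k := by
  rw [intervalIntegral.integral_comp_mul_left (fun x => exp x) hk.ne, integral_exp, mul_zero,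
    exp_zero, smul_eq_mul, le_div_iff₀ (neg_pos.mpr hk)]
  have hcancel : k⁻¹ * (1 - exp (k * t)) * -k = exp (k * t) - 1 := by
    linear_combination (exp (k * t) - 1) * mul_inv_cancel₀ hk.ne
  linarith

theorem exp_mul_abs_integral_exp_mul_le {γ β M t : ℝ} {φ : ℝ → ℝ} (hγβ : γ + β < 0)
    (ht : t ≤ 0) (hφ : ∀ s ∈ Set.Icc t 0, |φ s| ≤ M * exp (β * s)) :
    exp (-β * t) * |∫ s in t..0, exp (-γ * (t - s)) * φ s| ≤ M / (-β - γ) := by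
  have hM : 0 ≤ M := by
    simpa using (abs_nonneg _).trans (hφ 0 ⟨ht, le_rfl⟩)
  have hpointwise : ∀ s ∈ Set.Ioc t 0,
      ‖exp (-γ * (t - s)) * φ s‖ ≤ M * exp (-γ * t) * exp ((γ + β) * s) := by
    intro s hs
    calc ‖exp (-γ * (t - s)) * φ s‖ = exp (-γ * (t - s)) * |φ s| := by
          rw [Real.norm_eq_abs, abs_mul, abs_of_pos (exp_pos _)]
      _ ≤ exp (-γ * (t - s)) * (M * exp (β * s)) :=
          mul_le_mul_of_nonneg_left (hφ s (Set.Ioc_subset_Icc_self hs)) (exp_pos _).le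
      _ = M * exp (-γ * t) * exp ((γ + β) * s) := by
          rw [mul_left_comm, mul_assoc, ← exp_add, ← exp_add]; ring_nf
  have hintegral : |∫ s in t..0, exp (-γ * (t - s)) * φ s|
      ≤ M * exp (-γ * t) * (exp ((γ + β) * t) / -(γ + β)) := by
    rw [← Real.norm_eq_abs]
    refine (intervalIntegral.norm_integral_le_of_norm_le ht
      (Filter.Eventually.of_forall hpointwise)
      ((by fun_prop : Continuous _).intervalIntegrable _ _)).trans ?_
    rw [intervalIntegral.integral_const_mul]
    exact mul_le_mul_of_nonneg_left (integral_exp_mul_le_of_neg hγβ t) (by positivity)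
  calc exp (-β * t) * |∫ s in t..0, exp (-γ * (t - s)) * φ s|
      ≤ exp (-β * t) * (M * exp (-γ * t) * (exp ((γ + β) * t) / -(γ + β))) :=
        mul_le_mul_of_nonneg_left hintegral (exp_pos _).le
    _ = M * (exp (-β * t) * exp (-γ * t) * exp ((γ + β) * t)) / (-β - γ) := by ring
    _ = M / (-β - γ) := by
        rw [← exp_add, ← exp_add, show -β * t + -γ * t + (γ + β) * t = 0 by ring, exp_zero,
          mul_one]

theorem stmt8_general (γs : ℝ) (hγs : γs < 0) (β : ℝ) (hβ : β = -γs/2)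
    (φ : ℝ → ℝ)
    (M : ℝ) (hM : ∀ t ≤ (0:ℝ), Real.exp (-β*t) * |φ t| ≤ M) :
    ∀ t ≤ (0:ℝ),
      Real.exp (-β*t) * |∫ s in t..(0:ℝ), Real.exp (-γs * (t - s)) * φ s|
      ≤ (1 / (-β - γs)) * M := by
  intro t ht
  have hdecay : ∀ s ∈ Set.Icc t 0, |φ s| ≤ M * exp (β * s) := by
    intro s hs
    have hweighted := hM s hs.2
    rwa [neg_mul, exp_neg, inv_mul_le_iff₀ (exp_pos _), mul_comm] at hweighted
  rw [one_div_mul_eq_div]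
  exact exp_mul_abs_integral_exp_mul_le (by rw [hβ]; linarith) ht hdecay

/-- Convolution estimate in the weighted space `C_β^{s,-}`: for continuous `φ` with
`e^{-βt}|φ(t)| ≤ M` on `t ≤ 0`,
`sup_{t≤0} e^{-βt}|∫_t^0 e^{-γ_s(t-s)} φ(s) ds| ≤ M/(-β - γ_s)`, where `β = -γ_s/2`. -/
theorem stmt8 (γs : ℝ) (hγs : γs < 0) (β : ℝ) (hβ : β = -γs/2)
    (φ : ℝ → ℝ) (hφ : Continuous φ)
    (M : ℝ) (hM : ∀ t ≤ (0:ℝ), Real.exp (-β*t) * |φ t| ≤ M) :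
    ∀ t ≤ (0:ℝ),
      Real.exp (-β*t) * |∫ s in t..(0:ℝ), Real.exp (-γs * (t - s)) * φ s|
      ≤ (1 / (-β - γs)) * M :=
  stmt8_general γs hγs β hβ φ M hM
end

section
/- Let γ_s < 0, A = Id on a Hilbert space H_s, ε > 0, C > 0, and let F : (-∞,0] → H_s be measurable with ‖F(s)‖ ≤ C for all s. Then for the mild solution X(t) = e^{εAt}X₀ + ε∫_0^t e^{εA(t-s)}F(s)ds (with ‖e^{At}x‖ ≤ e^{-γ_s t}‖x‖ for t ≤ 0), there exists a constant C' (depending on ‖AX₀‖, C, γ_s but not on ε or t) such that ‖X(t) - X₀‖ ≤ C'(1 - e^{-γ_s ε t}) for all t ≤ 0. -/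
/-!
With `A = Id` the mild solution differs from `X₀` by `(e^{εt} - 1) X₀` plus `ε` times an
integral of `F` against the kernel `e^{ε(t-s)}`, whose total mass on `[t, 0]` is
`(1 - e^{εt}) / ε`; hence `‖X(t) - X₀‖ ≤ (‖X₀‖ + C)(1 - e^{εt})`, uniformly in `ε`.
Convexity of `exp` compares `1 - e^{u}` with `1 - e^{au}` for `a = -γ_s > 0`, up to the
factor `max 1 a⁻¹`.
-/

open Real MeasureTheory

lemma mul_one_sub_exp_le_one_sub_exp_mul {a : ℝ} (ha₀ : 0 ≤ a) (ha₁ : a ≤ 1) (u : ℝ) :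
    a * (1 - exp u) ≤ 1 - exp (a * u) := by
  have h := convexOn_exp.2 (Set.mem_univ u) (Set.mem_univ 0) ha₀ (sub_nonneg.2 ha₁)
    (add_sub_cancel a 1)
  simp only [smul_eq_mul, mul_zero, add_zero, exp_zero, mul_one] at h
  linarith

lemma one_sub_exp_le_max_mul_one_sub_exp_mul {a u : ℝ} (ha : 0 < a) (hu : u ≤ 0) :
    1 - exp u ≤ max 1 a⁻¹ * (1 - exp (a * u)) := by
  have h_nonneg : 0 ≤ 1 - exp (a * u) := sub_nonneg.2 (exp_le_one_iff.2 (by nlinarith))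
  rcases le_total a 1 with ha₁ | ha₁
  · calc 1 - exp u ≤ a⁻¹ * (1 - exp (a * u)) := by
          rw [le_inv_mul_iff₀ ha]; exact mul_one_sub_exp_le_one_sub_exp_mul ha.le ha₁ u
      _ ≤ max 1 a⁻¹ * (1 - exp (a * u)) := by gcongr; exact le_max_right _ _
  · calc 1 - exp u ≤ 1 - exp (a * u) := by gcongr; nlinarith
      _ ≤ max 1 a⁻¹ * (1 - exp (a * u)) := le_mul_of_one_le_left h_nonneg (le_max_left _ _)

lemma intervalIntegral_exp_mul_sub {ε : ℝ} (hε : ε ≠ 0) (t : ℝ) :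
    ∫ s in (0 : ℝ)..t, exp (ε * (t - s)) = ε⁻¹ * (exp (ε * t) - 1) := by
  simp_rw [mul_sub]
  rw [intervalIntegral.integral_comp_sub_mul (fun x => exp x) hε, integral_exp]
  simp [mul_sub]

section MildSolution

variable {E : Type*} [NormedAddCommGroup E] [NormedSpace ℝ E]

/-- The paper's mild solution `X(t)`, where `e^{εAt} = e^{εt}` because `A = Id`. -/
noncomputable def mildSolution (ε : ℝ) (X₀ : E) (F : ℝ → E) (t : ℝ) : E :=
  exp (ε * t) • X₀ + ε • ∫ s in (0 : ℝ)..t, exp (ε * (t - s)) • F s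

lemma norm_smul_intervalIntegral_exp_smul_le {ε C t : ℝ} {F : ℝ → E} (hε : 0 < ε) (ht : t ≤ 0)
    (hF : ∀ s ≤ 0, ‖F s‖ ≤ C) :
    ‖ε • ∫ s in (0 : ℝ)..t, exp (ε * (t - s)) • F s‖ ≤ C * (1 - exp (ε * t)) := by
  have h_le : ‖∫ s in (0 : ℝ)..t, exp (ε * (t - s)) • F s‖
      ≤ |∫ s in (0 : ℝ)..t, C * exp (ε * (t - s))| := by
    refine intervalIntegral.norm_integral_le_abs_of_norm_le ?_ (by apply Continuous.intervalIntegrable; fun_prop)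
    filter_upwards [ae_restrict_mem measurableSet_uIoc] with s hs
    have hs₀ : s ≤ 0 := hs.2.trans (max_le le_rfl ht)
    rw [norm_smul, norm_of_nonneg (exp_pos _).le, mul_comm C]
    exact mul_le_mul_of_nonneg_left (hF s hs₀) (exp_pos _).le
  have h_exp : exp (ε * t) ≤ 1 := exp_le_one_iff.2 (mul_nonpos_of_nonneg_of_nonpos hε.le ht)
  have h_C : 0 ≤ C := (norm_nonneg _).trans (hF 0 le_rfl)
  rw [intervalIntegral.integral_const_mul, intervalIntegral_exp_mul_sub hε.ne',
    abs_of_nonpos (mul_nonpos_of_nonneg_of_nonpos h_C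
      (mul_nonpos_of_nonneg_of_nonpos (inv_nonneg.2 hε.le) (sub_nonpos.2 h_exp)))] at h_le
  calc ‖ε • ∫ s in (0 : ℝ)..t, exp (ε * (t - s)) • F s‖
      ≤ ε * -(C * (ε⁻¹ * (exp (ε * t) - 1))) := by
        rw [norm_smul, norm_of_nonneg hε.le]; gcongr
    _ = C * (1 - exp (ε * t)) := by field_simp; ring

lemma norm_mildSolution_sub_le {ε C t : ℝ} {X₀ : E} {F : ℝ → E} (hε : 0 < ε) (ht : t ≤ 0)
    (hF : ∀ s ≤ 0, ‖F s‖ ≤ C) :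
    ‖mildSolution ε X₀ F t - X₀‖ ≤ (‖X₀‖ + C) * (1 - exp (ε * t)) := by
  have h_exp : exp (ε * t) ≤ 1 := exp_le_one_iff.2 (mul_nonpos_of_nonneg_of_nonpos hε.le ht)
  have h_split : mildSolution ε X₀ F t - X₀
      = (exp (ε * t) - 1) • X₀ + ε • ∫ s in (0 : ℝ)..t, exp (ε * (t - s)) • F s := by
    rw [mildSolution, sub_smul, one_smul]; abel
  have h_X₀ : ‖(exp (ε * t) - 1) • X₀‖ = (1 - exp (ε * t)) * ‖X₀‖ := by
    rw [norm_smul, norm_of_nonpos (sub_nonpos.2 h_exp), neg_sub]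
  calc ‖mildSolution ε X₀ F t - X₀‖
      ≤ (1 - exp (ε * t)) * ‖X₀‖ + C * (1 - exp (ε * t)) := by
        rw [h_split, ← h_X₀]
        exact (norm_add_le _ _).trans
          (add_le_add_right (norm_smul_intervalIntegral_exp_smul_le hε ht hF) _)
    _ = (‖X₀‖ + C) * (1 - exp (ε * t)) := by ring

end MildSolution

theorem stmt12_general {H : Type*} [NormedAddCommGroup H] [InnerProductSpace ℝ H]
    [MeasurableSpace H]
    (γs C : ℝ) (hγs : γs < 0) (hC : 0 < C) (X₀ : H) :
    ∃ C' > (0:ℝ), ∀ ε : ℝ, 0 < ε → ∀ F : ℝ → H, Measurable F →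
      (∀ s ≤ (0:ℝ), ‖F s‖ ≤ C) → ∀ t ≤ (0:ℝ),
        ‖(Real.exp (ε*t) • X₀
            + ε • ∫ s in (0:ℝ)..t, Real.exp (ε*(t-s)) • F s) - X₀‖
          ≤ C' * (1 - Real.exp (-γs * ε * t)) := by
  have ha : 0 < -γs := neg_pos.2 hγs
  refine ⟨(‖X₀‖ + C) * max 1 (-γs)⁻¹, by positivity, ?_⟩
  intro ε hε F _ hF t ht
  have h_exp := one_sub_exp_le_max_mul_one_sub_exp_mul ha (mul_nonpos_of_nonneg_of_nonpos hε.le ht)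
  rw [← mul_assoc] at h_exp
  calc ‖mildSolution ε X₀ F t - X₀‖ ≤ (‖X₀‖ + C) * (1 - exp (ε * t)) :=
        norm_mildSolution_sub_le hε ht hF
    _ ≤ (‖X₀‖ + C) * max 1 (-γs)⁻¹ * (1 - exp (-γs * ε * t)) := by
        rw [mul_assoc]; gcongr

/-- A-priori estimate for the scaled slow variable: with `A = Id` (so `e^{At}x = e^t x`),
semigroup bound `‖e^t x‖ ≤ e^{-γ_s t}‖x‖` for `t ≤ 0`, and `‖F(s)‖ ≤ C`, the mild
solution `X(t) = e^{εt}X₀ + ε∫_0^t e^{ε(t-s)}F(s)ds` satisfies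
`‖X(t) - X₀‖ ≤ C'(1 - e^{-γ_s ε t})` for all `t ≤ 0`, where `C'` does not depend on
`ε` or `t`. -/
theorem stmt12 {H : Type*} [NormedAddCommGroup H] [InnerProductSpace ℝ H]
    [CompleteSpace H] [MeasurableSpace H] [BorelSpace H]
    (γs C : ℝ) (hγs : γs < 0) (hC : 0 < C) (X₀ : H)
    (hsem : ∀ t ≤ (0:ℝ), ∀ x : H, ‖Real.exp t • x‖ ≤ Real.exp (-γs * t) * ‖x‖) :
    ∃ C' > (0:ℝ), ∀ ε : ℝ, 0 < ε → ∀ F : ℝ → H, Measurable F →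
      (∀ s ≤ (0:ℝ), ‖F s‖ ≤ C) → ∀ t ≤ (0:ℝ),
        ‖(Real.exp (ε*t) • X₀
            + ε • ∫ s in (0:ℝ)..t, Real.exp (ε*(t-s)) • F s) - X₀‖
          ≤ C' * (1 - Real.exp (-γs * ε * t)) :=
  stmt12_general γs C hγs hC X₀
end

section
/- Let γ_f > 0, K > 0 with K < γ_f, and α < 0 with α + γ_f > K. Suppose v : (-∞,0] → ℝ≥0 is continuous with sup_{t≤0} e^{-αt}v(t) < ∞ and satisfies v(t) ≤ K∫_{-∞}^t e^{-γ_f(t-s)}[g(s) + v(s)]ds for all t ≤ 0, where g : (-∞,0] → ℝ≥0 satisfies sup_{t≤0} e^{-αt}∫_{-∞}^t e^{-γ_f(t-s)}g(s)ds ≤ M. Then sup_{t≤0} e^{-αt}v(t) ≤ KM/(1 - K/(γ_f + α)). -/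
open Real MeasureTheory Set

lemma exp_mul_integrableOn_Iic {b : ℝ} (hb : 0 < b) (t : ℝ) :
    IntegrableOn (fun s => Real.exp (b * s)) (Set.Iic t) := by
  have A : MeasurableEmbedding fun x : ℝ => -x :=
    (Homeomorph.neg ℝ).isClosedEmbedding.measurableEmbedding
  have h : IntegrableOn (fun x => Real.exp (-b * x)) (Ici (-t)) := by
    rw [integrableOn_Ici_iff_integrableOn_Ioi]
    exact exp_neg_integrableOn_Ioi (-t) hb
  have hmap : (volume : Measure ℝ).restrict (Iic t)
      = Measure.map (fun x : ℝ => -x) ((volume : Measure ℝ).restrict (Ici (-t))) := by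
    conv_lhs => rw [← Measure.map_neg_eq_self (volume : Measure ℝ)]
    rw [Measure.restrict_map A.measurable measurableSet_Iic]
    congr 1
    ext x
    simp [neg_le]
  rw [IntegrableOn, hmap, A.integrable_map_iff]
  refine h.congr_fun (fun x _ => ?_) measurableSet_Ici
  simp [Function.comp]

lemma exp_mul_integral_Iic {b : ℝ} (hb : 0 < b) (t : ℝ) :
    ∫ s in Set.Iic t, Real.exp (b * s) = Real.exp (b * t) / b := by
  have h1 : ∫ s in Set.Iic t, Real.exp (b * s)
      = ∫ x in Set.Ioi (-t), (fun y => Real.exp (-y)) (b * x) := by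
    rw [← integral_comp_neg_Iic]
    congr 1; ext s; simp
  rw [h1, integral_comp_mul_left_Ioi (fun y => Real.exp (-y)) (-t) hb, integral_exp_neg_Ioi]
  rw [smul_eq_mul]
  rw [show -(b * -t) = b * t by ring]
  ring

/-- Weighted Gronwall-type estimate: if `v ≥ 0` is continuous with finite weighted norm
`sup_{t≤0} e^{-αt}v(t)` and satisfies
`v(t) ≤ K∫_{-∞}^t e^{-γ_f(t-s)}[g(s)+v(s)]ds`, where the weighted convolution of `g` is
bounded by `M`, then `sup_{t≤0} e^{-αt}v(t) ≤ KM/(1 - K/(γ_f+α))`. -/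
theorem stmt13 (γf K α M : ℝ) (hγf : 0 < γf) (hK : 0 < K) (hKγ : K < γf)
    (hα : α < 0) (hαγ : α + γf > K)
    (v g : ℝ → ℝ) (hv : Continuous v)
    (hv0 : ∀ t ≤ (0:ℝ), 0 ≤ v t) (hg0 : ∀ t ≤ (0:ℝ), 0 ≤ g t)
    (hfin : ∃ N : ℝ, ∀ t ≤ (0:ℝ), Real.exp (-α*t) * v t ≤ N)
    (hrec : ∀ t ≤ (0:ℝ),
      v t ≤ K * ∫ s in Set.Iic t, Real.exp (-γf*(t-s)) * (g s + v s))
    (hgM : ∀ t ≤ (0:ℝ),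
      Real.exp (-α*t) * ∫ s in Set.Iic t, Real.exp (-γf*(t-s)) * g s ≤ M) :
    ∀ t ≤ (0:ℝ), Real.exp (-α*t) * v t ≤ K*M / (1 - K/(γf + α)) := by
  obtain ⟨N, hN⟩ := hfin
  set c : ℝ := γf + α with hc
  have hcpos : 0 < c := by simp only [hc]; linarith
  have hKc : K / c < 1 := (div_lt_one hcpos).mpr (by simp only [hc]; linarith)
  have h1Kc : 0 < 1 - K / c := by linarith
  set A : Set ℝ := (fun t => Real.exp (-α*t) * v t) '' Set.Iic 0 with hA
  have hAne : A.Nonempty := ⟨_, ⟨0, Set.mem_Iic.mpr le_rfl, rfl⟩⟩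
  have hAbdd : BddAbove A := ⟨N, by rintro x ⟨t, ht, rfl⟩; exact hN t ht⟩
  set S := sSup A with hS
  have hle : ∀ t ≤ (0:ℝ), Real.exp (-α*t) * v t ≤ S :=
    fun t ht => le_csSup hAbdd ⟨t, Set.mem_Iic.mpr ht, rfl⟩
  have hS0 : 0 ≤ S :=
    le_trans (mul_nonneg (Real.exp_pos _).le (hv0 0 le_rfl)) (hle 0 le_rfl)
  have hM0 : 0 ≤ M := by
    refine le_trans ?_ (hgM 0 le_rfl)
    apply mul_nonneg (Real.exp_pos _).le
    exact setIntegral_nonneg measurableSet_Iic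
      (fun s hs => mul_nonneg (Real.exp_pos _).le (hg0 s hs))
  have hvS : ∀ s ≤ (0:ℝ), v s ≤ S * Real.exp (α*s) := by
    intro s hs
    have h1 := hle s hs
    have h2 : Real.exp (α*s) * Real.exp (-α*s) = 1 := by
      rw [← Real.exp_add]; ring_nf; exact Real.exp_zero
    calc v s = Real.exp (α*s) * (Real.exp (-α*s) * v s) := by
            rw [← mul_assoc, h2, one_mul]
      _ ≤ Real.exp (α*s) * S :=
            mul_le_mul_of_nonneg_left h1 (Real.exp_pos _).le
      _ = S * Real.exp (α*s) := mul_comm _ _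
  -- key claim
  have key : ∀ t ≤ (0:ℝ), Real.exp (-α*t) * v t ≤ K*M + K/c * S := by
    intro t ht
    have hr := hrec t ht
    have hgm := hgM t ht
    set φ : ℝ → ℝ := fun s => Real.exp (-γf*(t-s)) * v s with hφ
    set ψ : ℝ → ℝ := fun s => Real.exp (-γf*(t-s)) * (g s + v s) with hψ
    have hbound : ∀ s ∈ Set.Iic t, φ s ≤ S * Real.exp (-γf*t) * Real.exp (c*s) := by
      intro s hs
      have hs0 : s ≤ (0:ℝ) := le_trans hs ht
      have heq : Real.exp (-γf*(t-s)) * Real.exp (α*s)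
          = Real.exp (-γf*t) * Real.exp (c*s) := by
        rw [← Real.exp_add, ← Real.exp_add]; congr 1; simp only [hc]; ring
      calc φ s ≤ Real.exp (-γf*(t-s)) * (S * Real.exp (α*s)) :=
            mul_le_mul_of_nonneg_left (hvS s hs0) (Real.exp_pos _).le
        _ = S * (Real.exp (-γf*(t-s)) * Real.exp (α*s)) := by ring
        _ = S * Real.exp (-γf*t) * Real.exp (c*s) := by rw [heq]; ring
    have hbint : IntegrableOn (fun s => S * Real.exp (-γf*t) * Real.exp (c*s))
        (Set.Iic t) := (exp_mul_integrableOn_Iic hcpos t).const_mul _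
    have hφcont : Continuous φ := by
      simp only [hφ]; fun_prop
    have hφint : IntegrableOn φ (Set.Iic t) := by
      refine Integrable.mono hbint hφcont.aestronglyMeasurable ?_
      rw [ae_restrict_iff' measurableSet_Iic]
      refine Filter.Eventually.of_forall (fun s hs => ?_)
      have h1 : 0 ≤ φ s :=
        mul_nonneg (Real.exp_pos _).le (hv0 s (le_trans hs ht))
      have h2 : (0:ℝ) ≤ S * Real.exp (-γf*t) * Real.exp (c*s) := by positivity
      rw [Real.norm_eq_abs, Real.norm_eq_abs, abs_of_nonneg h1, abs_of_nonneg h2]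
      exact hbound s hs
    have hφval : ∫ s in Set.Iic t, φ s ≤ S * Real.exp (α*t) / c := by
      have heq2 : Real.exp (-γf*t) * Real.exp (c*t) = Real.exp (α*t) := by
        rw [← Real.exp_add]; congr 1; simp only [hc]; ring
      calc ∫ s in Set.Iic t, φ s
          ≤ ∫ s in Set.Iic t, S * Real.exp (-γf*t) * Real.exp (c*s) :=
            setIntegral_mono_on hφint hbint measurableSet_Iic hbound
        _ = S * Real.exp (-γf*t) * (Real.exp (c*t)/c) := by
            rw [MeasureTheory.integral_const_mul, exp_mul_integral_Iic hcpos]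
        _ = S * (Real.exp (-γf*t) * Real.exp (c*t)) / c := by ring
        _ = S * Real.exp (α*t) / c := by rw [heq2]
    have hexp : Real.exp (-α*t) * Real.exp (α*t) = 1 := by
      rw [← Real.exp_add]; ring_nf; exact Real.exp_zero
    by_cases hint : IntegrableOn ψ (Set.Iic t)
    · have hgint : IntegrableOn (fun s => ψ s - φ s) (Set.Iic t) := hint.sub hφint
      have hgeq : (fun s => Real.exp (-γf*(t-s)) * g s) = fun s => ψ s - φ s := by
        funext s; simp only [hψ, hφ]; ring
      have hsplit : ∫ s in Set.Iic t, ψ s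
          = (∫ s in Set.Iic t, Real.exp (-γf*(t-s)) * g s) + ∫ s in Set.Iic t, φ s := by
        rw [hgeq, integral_sub hint hφint]; ring
      rw [hgeq] at hgm
      have hgm2 : Real.exp (-α*t) * ∫ s in Set.Iic t, (ψ s - φ s) ≤ M := hgm
      have h3 : Real.exp (-α*t) * (S * Real.exp (α*t)/c) = S / c := by
        rw [show Real.exp (-α*t) * (S * Real.exp (α*t)/c)
            = S * (Real.exp (-α*t) * Real.exp (α*t)) / c from by ring, hexp]
        ring
      calc Real.exp (-α*t) * v t
          ≤ Real.exp (-α*t) * (K * ∫ s in Set.Iic t, ψ s) :=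
            mul_le_mul_of_nonneg_left hr (Real.exp_pos _).le
        _ = K * (Real.exp (-α*t) * ∫ s in Set.Iic t, (ψ s - φ s))
            + K * (Real.exp (-α*t) * ∫ s in Set.Iic t, φ s) := by
            rw [hsplit, hgeq]; ring
        _ ≤ K * M + K * (Real.exp (-α*t) * (S * Real.exp (α*t)/c)) := by
            refine add_le_add (mul_le_mul_of_nonneg_left hgm2 hK.le) ?_
            refine mul_le_mul_of_nonneg_left ?_ hK.le
            exact mul_le_mul_of_nonneg_left hφval (Real.exp_pos _).le
        _ = K*M + K/c * S := by rw [h3]; ring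
    · have hvt : v t ≤ 0 := by
        rw [integral_undef hint, mul_zero] at hr; exact hr
      have hvt0 : v t = 0 := le_antisymm hvt (hv0 t ht)
      rw [hvt0, mul_zero]
      exact add_nonneg (mul_nonneg hK.le hM0)
        (mul_nonneg (div_nonneg hK.le hcpos.le) hS0)
  -- conclude
  have hSle : S ≤ K*M + K/c * S := by
    refine csSup_le hAne ?_
    rintro x ⟨t, ht, rfl⟩
    exact key t ht
  have hSfin : S ≤ K*M / (1 - K/c) := by
    rw [le_div_iff₀ h1Kc]; nlinarith
  intro t ht
  exact le_trans (hle t ht) hSfin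
end
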